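/- Let t ≥ 1 and c ≥ 3 be integers and let n be an integer with n ≥ 4t² + 10t and n ≥ (t+1)c − 1. Then λ₁(D(K_{tc−1} ∨ (K_{n−(t+1)c+2} + (c−1)K₁))) ≥ n + 2. -/

import Mathlib

open SimpleGraph Finset

/-- The distance matrix of a graph: the `(i,j)` entry is the graph distance from `i` to `j`. -/
noncomputable def distMatrix {V : Type*} [Fintype V] (G : SimpleGraph V) : Matrix V V ℝ :=
  fun i j => (G.dist i j : ℝ)

/-- The distance spectral radius `λ₁(D(G))`: the largest eigenvalue of the distance matrix. -/
noncomputable def distSpecRad {V : Type*} [Fintype V] (G : SimpleGraph V) : ℝ :=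
  sSup {μ : ℝ | ∃ v : V → ℝ, v ≠ 0 ∧ (distMatrix G).mulVec v = μ • v}

/-- The join `G ∨ H` of two graphs: all edges between the parts are added. -/
def graphJoin {α β : Type*} (G : SimpleGraph α) (H : SimpleGraph β) :
    SimpleGraph (α ⊕ β) where
  Adj x y :=
    match x, y with
    | Sum.inl a, Sum.inl a' => G.Adj a a'
    | Sum.inr b, Sum.inr b' => H.Adj b b'
    | Sum.inl _, Sum.inr _ => True
    | Sum.inr _, Sum.inl _ => True
  symm := by constructor; rintro (a | a) (b | b) h <;> first | exact G.adj_symm h | exact H.adj_symm h | trivial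
  loopless := by constructor; rintro (a | a) h <;> first | exact G.irrefl h | exact H.irrefl h

/-- The disjoint union `G + H` of two graphs. -/
def graphSum {α β : Type*} (G : SimpleGraph α) (H : SimpleGraph β) :
    SimpleGraph (α ⊕ β) where
  Adj x y :=
    match x, y with
    | Sum.inl a, Sum.inl a' => G.Adj a a'
    | Sum.inr b, Sum.inr b' => H.Adj b b'
    | _, _ => False
  symm := by constructor; rintro (a | a) (b | b) h <;> first | exact G.adj_symm h | exact H.adj_symm h | exact h
  loopless := by constructor; rintro (a | a) h <;> first | exact G.irrefl h | exact H.irrefl h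

/-- `m` pairwise disjoint copies of the complete graph `K_p`. -/
def repK (m p : ℕ) : SimpleGraph (Fin m × Fin p) where
  Adj x y := x.1 = y.1 ∧ x ≠ y
  symm := ⟨fun _ _ h => ⟨h.1.symm, h.2.symm⟩⟩
  loopless := ⟨fun _ h => h.2 rfl⟩

/-- The disjoint union of cliques `K_{m 0} + K_{m 1} + ⋯`. -/
def cliquesGraph {c : ℕ} (m : Fin c → ℕ) : SimpleGraph (Σ i, Fin (m i)) where
  Adj x y := x.1 = y.1 ∧ x ≠ y
  symm := ⟨fun _ _ h => ⟨h.1.symm, h.2.symm⟩⟩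
  loopless := ⟨fun _ h => h.2 rfl⟩

/-- `G` is `t`-tough: whenever deleting a vertex set `S` disconnects the graph,
`|S| ≥ t · c(G - S)`. -/
def IsTTough {V : Type*} [Fintype V] (t : ℝ) (G : SimpleGraph V) : Prop :=
  ∀ S : Finset V, ¬ (G.induce ((S : Set V)ᶜ)).Connected →
    t * Nat.card (G.induce ((S : Set V)ᶜ)).ConnectedComponent ≤ (S.card : ℝ)


/-!
The vertex partition into the three parts `K_{tc-1}`, `K_{n-(t+1)c+2}` and `(c-1)K₁` is equitable
for the distance matrix, because the graph has diameter 2. Hence every eigenvalue of the `3 × 3`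
quotient matrix is an eigenvalue of `D(G)`, and it suffices to show that the characteristic
polynomial of the quotient matrix has a root `≥ n + 2`. It is positive at `2n`, so by the
intermediate value theorem it is enough to show that it is `≤ 0` at `n + 2`. This polynomial
inequality follows from `n ≥ 4t² + 10t` when `c ≤ 4t + 4`, and from `(t + 1)c ≤ n + 1` when
`c ≥ 4t + 4`.
-/

open scoped Matrix

namespace Matrix

variable {ι κ R : Type*} [Fintype ι] [Fintype κ]

theorem bddAbove_eigenvalues [DecidableEq ι] (M : Matrix ι ι ℝ) :
    BddAbove {μ : ℝ | ∃ v : ι → ℝ, v ≠ 0 ∧ M *ᵥ v = μ • v} := by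
  refine (Module.End.finite_hasEigenvalue (toLin' M)).subset ?_ |>.bddAbove
  rintro μ ⟨v, hv, h⟩
  exact Module.End.hasEigenvalue_of_hasEigenvector ⟨by simpa using h, hv⟩

theorem exists_mulVec_eq_smul_of_det_eq_zero {K : Type*} [Field K] [DecidableEq ι]
    {Q : Matrix ι ι K} {μ : K} (h : (μ • 1 - Q).det = 0) : ∃ w ≠ 0, Q *ᵥ w = μ • w := by
  obtain ⟨w, hw, hQ⟩ := exists_mulVec_eq_zero_iff.mpr h
  rw [sub_mulVec, smul_mulVec, one_mulVec, sub_eq_zero] at hQ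
  exact ⟨w, hw, hQ.symm⟩

/-- `W * diagonal (block sizes) - diagonal W.diag` is the quotient matrix of the equitable
partition given by the fibres of `π`. -/
theorem mulVec_comp_eq_of_offDiag [CommRing R] [DecidableEq ι] [DecidableEq κ]
    (π : ι → κ) (W : Matrix κ κ R) (w : κ → R) :
    (of fun i j => if i = j then 0 else W (π i) (π j)) *ᵥ (w ∘ π) =
      ((W * diagonal (fun l => (#{i | π i = l} : R)) - diagonal W.diag) *ᵥ w) ∘ π := by
  ext i
  have hfiber : ∑ j, W (π i) (π j) * w (π j) = ∑ l, W (π i) l * #{j | π j = l} * w l := by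
    rw [← Finset.sum_fiberwise univ π]
    refine Finset.sum_congr rfl fun l _ => ?_
    rw [Finset.sum_congr rfl fun j hj => by rw [(Finset.mem_filter.mp hj).2], Finset.sum_const,
      nsmul_eq_mul]
    ring
  have hdiag : ∀ j, (if i = j then 0 else W (π i) (π j)) * w (π j) =
      W (π i) (π j) * w (π j) - if i = j then W (π i) (π i) * w (π i) else 0 := by
    intro j
    split_ifs with h <;> simp [h]
  simp only [mulVec, dotProduct, of_apply, Function.comp_apply, hdiag, Finset.sum_sub_distrib,
    Finset.sum_ite_eq, Finset.mem_univ, if_true, hfiber, sub_apply, sub_mul, mul_diagonal,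
    diagonal_apply, ite_mul, zero_mul, diag_apply]

end Matrix

theorem le_distSpecRad {V : Type*} [Fintype V] (G : SimpleGraph V) {μ : ℝ} {v : V → ℝ}
    (hv : v ≠ 0) (h : distMatrix G *ᵥ v = μ • v) : μ ≤ distSpecRad G := by
  classical
  exact le_csSup (Matrix.bddAbove_eigenvalues _) ⟨v, hv, h⟩

theorem SimpleGraph.dist_eq_ite_of_commonNeighbors_nonempty {V : Type*} {G : SimpleGraph V}
    [DecidableEq V] [DecidableRel G.Adj]
    (h : ∀ u v, u ≠ v → ¬ G.Adj u v → (G.commonNeighbors u v).Nonempty) (u v : V) :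
    G.dist u v = if u = v then 0 else if G.Adj u v then 1 else 2 := by
  split_ifs with huv hadj
  · simp [huv]
  · exact dist_eq_one_iff_adj.mpr hadj
  · simp [dist, edist_eq_two_iff.mpr ⟨huv, hadj, h u v huv hadj⟩]

theorem graphJoin_top_commonNeighbors_nonempty {α β : Type*} [Nonempty α] (H : SimpleGraph β)
    {u v : α ⊕ β} (huv : u ≠ v) (h : ¬ (graphJoin ⊤ H).Adj u v) :
    ((graphJoin ⊤ H).commonNeighbors u v).Nonempty := by
  obtain ⟨a⟩ := ‹Nonempty α›
  refine ⟨.inl a, ?_⟩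
  rcases u with x | x <;> rcases v with y | y <;>
    simp_all [graphJoin, SimpleGraph.mem_commonNeighbors]

/-- `K_a ∨ (K_b + d K₁)`. -/
abbrev cliqueJoin (a b d : ℕ) : SimpleGraph (Fin a ⊕ (Fin b ⊕ Fin d)) :=
  graphJoin ⊤ (graphSum ⊤ ⊥)

namespace cliqueJoin

variable {a b d : ℕ}

def blockOf : Fin a ⊕ (Fin b ⊕ Fin d) → Fin 3 :=
  Sum.elim (fun _ => 0) (Sum.elim (fun _ => 1) (fun _ => 2))

theorem blockOf_surjective (ha : 0 < a) (hb : 0 < b) (hd : 0 < d) :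
    Function.Surjective (blockOf (a := a) (b := b) (d := d)) := by
  intro l
  fin_cases l
  exacts [⟨.inl ⟨0, ha⟩, rfl⟩, ⟨.inr (.inl ⟨0, hb⟩), rfl⟩, ⟨.inr (.inr ⟨0, hd⟩), rfl⟩]

theorem card_blockOf (l : Fin 3) :
    #{i : Fin a ⊕ (Fin b ⊕ Fin d) | blockOf i = l} = ![a, b, d] l := by
  rw [Finset.card_eq_sum_ones, Finset.sum_filter, Fintype.sum_sum_type, Fintype.sum_sum_type]
  fin_cases l <;> simp [blockOf]

theorem distMatrix_eq (ha : 0 < a) :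
    distMatrix (cliqueJoin a b d) = Matrix.of fun i j =>
      if i = j then 0 else !![1, 1, 1; 1, 1, 2; 1, 2, 2] (blockOf i) (blockOf j) := by
  classical
  have : Nonempty (Fin a) := ⟨⟨0, ha⟩⟩
  ext i j
  rw [distMatrix, SimpleGraph.dist_eq_ite_of_commonNeighbors_nonempty
    (fun _ _ => graphJoin_top_commonNeighbors_nonempty _)]
  rcases i with x | x | x <;> rcases j with y | y | y <;>
    simp [graphJoin, graphSum, blockOf] <;> split_ifs <;> simp_all

def quotientMatrix (a b d : ℕ) : Matrix (Fin 3) (Fin 3) ℝ :=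
  !![a - 1, b, d; a, b - 1, 2 * d; a, 2 * b, 2 * d - 2]

theorem distMatrix_mulVec_comp_blockOf (ha : 0 < a) (w : Fin 3 → ℝ) :
    distMatrix (cliqueJoin a b d) *ᵥ (w ∘ blockOf) = (quotientMatrix a b d *ᵥ w) ∘ blockOf := by
  rw [distMatrix_eq ha, Matrix.mulVec_comp_eq_of_offDiag]
  congr 3
  ext k l
  simp only [Matrix.sub_apply, Matrix.mul_diagonal, Matrix.diagonal_apply, Matrix.diag_apply,
    card_blockOf]
  fin_cases k <;> fin_cases l <;> simp [quotientMatrix]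

def quotientCharpoly (a b d μ : ℝ) : ℝ :=
  μ ^ 3 - (a + b + 2 * d - 4) * μ ^ 2 - (3 * a + 3 * b + 4 * d + 2 * b * d - a * d - 5) * μ
    + (a * b * d + a * d - 2 * b * d - 2 * a - 2 * b - 2 * d + 2)

theorem det_smul_one_sub_quotientMatrix (μ : ℝ) :
    (μ • 1 - quotientMatrix a b d).det = quotientCharpoly a b d μ := by
  rw [Matrix.det_fin_three]
  simp [quotientMatrix, quotientCharpoly]
  ring

theorem le_distSpecRad_of_quotientCharpoly_eq_zero (ha : 0 < a) (hb : 0 < b) (hd : 0 < d)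
    {μ : ℝ} (hμ : quotientCharpoly a b d μ = 0) : μ ≤ distSpecRad (cliqueJoin a b d) := by
  obtain ⟨w, hw, hQ⟩ := Matrix.exists_mulVec_eq_smul_of_det_eq_zero
    ((det_smul_one_sub_quotientMatrix μ).trans hμ)
  refine le_distSpecRad _ (v := w ∘ blockOf) ?_ ?_
  · exact fun h => hw ((blockOf_surjective ha hb hd).injective_comp_right h)
  · rw [distMatrix_mulVec_comp_blockOf ha, hQ]
    rfl

theorem quotientCharpoly_pos (a b d : ℕ) : 0 < quotientCharpoly a b d (2 * (a + b + d)) := by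
  unfold quotientCharpoly
  ring_nf
  positivity

theorem exists_quotientCharpoly_root_ge {x : ℝ} (hx : x ≤ 2 * (a + b + d))
    (h : quotientCharpoly a b d x ≤ 0) : ∃ r, x ≤ r ∧ quotientCharpoly a b d r = 0 := by
  have hcont : Continuous (quotientCharpoly a b d) := by
    unfold quotientCharpoly
    fun_prop
  obtain ⟨r, hr, hroot⟩ := intermediate_value_Icc hx hcont.continuousOn
    ⟨h, (quotientCharpoly_pos a b d).le⟩
  exact ⟨r, hr.1, hroot⟩

theorem quotientCharpoly_nonpos_of_le (t c n : ℝ) (ht : 1 ≤ t) (hc : 3 ≤ c)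
    (hct : c ≤ 4 * t + 4) (hn : 4 * t ^ 2 + 10 * t ≤ n) :
    quotientCharpoly (t * c - 1) (n + 2 - (t + 1) * c) (c - 1) (n + 2) ≤ 0 := by
  obtain ⟨x, hx, rfl⟩ : ∃ x, 0 ≤ x ∧ c = x + 3 := ⟨c - 3, by linarith, by ring⟩
  obtain ⟨y, hy, rfl⟩ : ∃ y, 0 ≤ y ∧ t = y + 1 := ⟨t - 1, by linarith, by ring⟩
  obtain ⟨u, hu, rfl⟩ : ∃ u, 0 ≤ u ∧ n = 4 * (y + 1) ^ 2 + 10 * (y + 1) + u :=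
    ⟨n - 4 * (y + 1) ^ 2 - 10 * (y + 1), by linarith, by ring⟩
  have hxy : 0 ≤ 4 * y + 5 - x := by linarith
  -- The polynomial is `p₀ + p₁ u - 3 (x + 1) u²`, with `p₀`, `p₁` the left-hand sides below.
  have hp₀ : 16*x^2*y^3 - x^3*y^2 - 48*x*y^4 + 88*x^2*y^2 - 3*x^3*y - 352*x*y^3 - 48*y^4
      + 152*x^2*y - 917*x*y^2 - 2*x^3 - 336*y^3 + 87*x^2 - 1001*x*y - 802*y^2 - 376*x
      - 744*y - 198 ≤ 0 := by
    nlinarith [mul_nonneg (mul_nonneg hxy (sq_nonneg x)) hy, mul_nonneg hxy (sq_nonneg x),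
      mul_nonneg (mul_nonneg hxy (sq_nonneg x)) (sq_nonneg y),
      mul_nonneg (mul_nonneg (mul_nonneg hxy hx) hy) hy, mul_nonneg (mul_nonneg hxy hx) hy,
      mul_nonneg (mul_nonneg hxy hx) (mul_nonneg hy (mul_nonneg hy hy)),
      mul_nonneg (mul_nonneg hxy hx) hx, mul_nonneg hxy hx]
  have hp₁ : 4*x^2*y - 24*x*y^2 + 6*x^2 - 88*x*y - 24*y^2 - 71*x - 84*y - 61 ≤ 0 := by
    nlinarith [mul_nonneg (mul_nonneg hxy hx) hy, mul_nonneg hxy hx]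
  unfold quotientCharpoly
  nlinarith [mul_nonpos_of_nonneg_of_nonpos hu hp₁, mul_nonneg (mul_nonneg hx hu) hu,
    mul_nonneg hu hu]

theorem quotientCharpoly_nonpos_of_ge (t c n : ℝ) (ht : 1 ≤ t) (hct : 4 * t + 4 ≤ c)
    (hn : (t + 1) * c ≤ n + 1) :
    quotientCharpoly (t * c - 1) (n + 2 - (t + 1) * c) (c - 1) (n + 2) ≤ 0 := by
  obtain ⟨s, hs, rfl⟩ : ∃ s, 0 ≤ s ∧ n = (t + 1) * c - 1 + s :=
    ⟨n + 1 - (t + 1) * c, by linarith, by ring⟩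
  -- As a polynomial in `s`, all coefficients are nonpositive.
  have hq₀ : 27 + 12*c - 2*c^2 - c^3 + 18*t*c + 4*t*c^2 + 3*t^2*c^2 - t*c^3 ≤ 0 := by
    nlinarith [mul_nonneg (sub_nonneg.2 hct) (sub_nonneg.2 ht), sq_nonneg (c - 4*t - 4),
      mul_nonneg (mul_nonneg (sub_nonneg.2 hct) (sub_nonneg.2 ht)) (le_trans (by linarith) hct),
      sq_nonneg (t*c)]
  have hq₁ : 26 - c - 4*c^2 + 8*t*c - 2*t*c^2 ≤ 0 := by
    nlinarith [mul_nonneg (sub_nonneg.2 hct) (sub_nonneg.2 ht)]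
  have hq₂ : 6 - 3 * c ≤ 0 := by linarith
  unfold quotientCharpoly
  nlinarith [mul_nonpos_of_nonneg_of_nonpos hs hq₁,
    mul_nonpos_of_nonneg_of_nonpos (sq_nonneg s) hq₂]

theorem quotientCharpoly_nonpos (t c n : ℝ) (ht : 1 ≤ t) (hc : 3 ≤ c)
    (hn₁ : 4 * t ^ 2 + 10 * t ≤ n) (hn₂ : (t + 1) * c ≤ n + 1) :
    quotientCharpoly (t * c - 1) (n + 2 - (t + 1) * c) (c - 1) (n + 2) ≤ 0 :=
  (le_total c (4 * t + 4)).elim (quotientCharpoly_nonpos_of_le t c n ht hc · hn₁)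
    (quotientCharpoly_nonpos_of_ge t c n ht · hn₂)

end cliqueJoin

theorem stmt17 (t c n : ℕ) (ht : 1 ≤ t) (hc : 3 ≤ c)
    (hn1 : 4 * t ^ 2 + 10 * t ≤ n) (hn2 : (t + 1) * c ≤ n + 1) :
    (n : ℝ) + 2 ≤
      distSpecRad (graphJoin (⊤ : SimpleGraph (Fin (t * c - 1)))
        (graphSum (⊤ : SimpleGraph (Fin (n + 2 - (t + 1) * c)))
          (⊥ : SimpleGraph (Fin (c - 1))))) := by
  have htc : c ≤ t * c := Nat.le_mul_of_pos_left c ht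
  have hsplit : (t + 1) * c = t * c + c := by ring
  have hneg : cliqueJoin.quotientCharpoly (t * c - 1 : ℕ) (n + 2 - (t + 1) * c : ℕ) (c - 1 : ℕ)
      (n + 2) ≤ 0 := by
    push_cast [Nat.cast_sub (by omega : 1 ≤ t * c), Nat.cast_sub (by omega : (t + 1) * c ≤ n + 2),
      Nat.cast_sub (by omega : 1 ≤ c)]
    exact cliqueJoin.quotientCharpoly_nonpos t c n (by exact_mod_cast ht) (by exact_mod_cast hc)
      (by exact_mod_cast hn1) (by exact_mod_cast hn2)
  have hle : (n : ℝ) + 2 ≤ 2 * ((t * c - 1 : ℕ) + (n + 2 - (t + 1) * c : ℕ) + (c - 1 : ℕ)) := by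
    exact_mod_cast (by omega : n + 2 ≤ 2 * (t * c - 1 + (n + 2 - (t + 1) * c) + (c - 1)))
  obtain ⟨r, hr, hroot⟩ := cliqueJoin.exists_quotientCharpoly_root_ge hle hneg
  exact hr.trans
    (cliqueJoin.le_distSpecRad_of_quotientCharpoly_eq_zero (by omega) (by omega) (by omega) hroot)
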